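/- arXiv:1203.3252 — 9 statements merged into one kernel-verified Lean document; each statement's English description precedes it below -/
import Mathlib

section
/- For q ≥ 1, the polynomial G_q(x) = ∫₀ˣ P_{q-1}(t) dt satisfies G_q(x) = (1/(q(q-1))) x(x-1) P'_{q-1}(x) for q ≥ 2. -/
/-!
Since `Xⁿ (X - 1)ⁿ = (X² - X)ⁿ`, the Rodrigues numerator `u` satisfies `(X² - X) u' = n (2X - 1) u`;
differentiating this `n + 1` times gives the Legendre equation `((X² - X) P_n')' = n (n + 1) P_n`.
So `(X² - X) P_n' / (n (n + 1))` is an antiderivative of `P_n` vanishing at `0`, and `G_{n+1}` is it.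
-/

/-- The shifted Legendre polynomial on `[0,1]`, `P_q(x) = (1/q!) dᵠ/dxᵠ [xᵠ(x-1)ᵠ]`. -/
noncomputable def legP (q : ℕ) : Polynomial ℝ :=
  (q.factorial : ℝ)⁻¹ • (Polynomial.derivative^[q] (Polynomial.X ^ q * (Polynomial.X - 1) ^ q))

/-- `G_q(x) = ∫₀ˣ P_{q-1}(t) dt`. -/
noncomputable def legG (q : ℕ) (x : ℝ) : ℝ :=
  ∫ t in (0:ℝ)..x, (legP (q - 1)).eval t

open Polynomial

section CommRing

variable {R : Type*} [CommRing R]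

theorem derivative_X_sq_sub_X : derivative (X ^ 2 - X : R[X]) = 2 * X - 1 := by
  rw [derivative_sub, derivative_X_sq, derivative_X, C_ofNat]

theorem derivative_two_mul_X_sub_one : derivative (2 * X - 1 : R[X]) = 2 := by
  simp

theorem X_sq_sub_X_mul_derivative_X_pow_mul_X_sub_one_pow (n : ℕ) :
    (X ^ 2 - X) * derivative ((X : R[X]) ^ n * (X - 1) ^ n) =
      C (n : R) * (2 * X - 1) * (X ^ n * (X - 1) ^ n) := by
  rw [← mul_pow, show (X : R[X]) * (X - 1) = X ^ 2 - X by ring, derivative_pow,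
    derivative_X_sq_sub_X]
  cases n with
  | zero => simp
  | succ m => rw [Nat.add_sub_cancel, pow_succ _ m]; ring

-- The coefficients come from Leibniz's rule, `X² - X` having second derivative `2`.
theorem X_sq_sub_X_mul_iterate_derivative {f : R[X]} {c : R}
    (hf : (X ^ 2 - X) * derivative f = C c * (2 * X - 1) * f) (k : ℕ) :
    (X ^ 2 - X) * derivative^[k + 2] f =
      C (c - (k + 1)) * (2 * X - 1) * derivative^[k + 1] f +
        C ((k + 1) * (2 * c - k)) * derivative^[k] f := by
  induction k with
  | zero =>
    have h := congrArg derivative hf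
    simp only [derivative_mul, derivative_X_sq_sub_X, derivative_two_mul_X_sub_one,
      derivative_C, zero_mul, zero_add] at h
    simp only [Function.iterate_succ_apply', Function.iterate_zero_apply, map_sub, map_add,
      map_mul, map_one, map_ofNat, Nat.cast_zero, map_zero]
    linear_combination h
  | succ k ih =>
    have h := congrArg derivative ih
    simp only [derivative_mul, derivative_add, derivative_X_sq_sub_X,
      derivative_two_mul_X_sub_one, derivative_C, zero_mul, zero_add,
      ← Function.iterate_succ_apply' derivative] at h
    simp only [map_sub, map_add, map_mul, map_natCast, map_one, map_ofNat] at h ⊢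
    push_cast
    linear_combination h

-- The Legendre differential equation, before normalisation by `n!`.
theorem derivative_X_sq_sub_X_mul_iterate_derivative (n : ℕ) :
    derivative ((X ^ 2 - X) * derivative^[n + 1] ((X : R[X]) ^ n * (X - 1) ^ n)) =
      C ((n : R) * (n + 1)) * derivative^[n] (X ^ n * (X - 1) ^ n) := by
  cases n with
  | zero => simp
  | succ m =>
    rw [X_sq_sub_X_mul_iterate_derivative
      (X_sq_sub_X_mul_derivative_X_pow_mul_X_sub_one_pow (m + 1)) m]
    have hc : ((m + 1 : ℕ) : R) - (m + 1) = 0 := by push_cast; ring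
    rw [hc, C_0, zero_mul, zero_mul, zero_add, derivative_C_mul,
      ← Function.iterate_succ_apply' derivative]
    congr 2
    push_cast
    ring

end CommRing

theorem derivative_X_sq_sub_X_mul_derivative_legP (n : ℕ) :
    derivative ((X ^ 2 - X) * derivative (legP n)) = C ((n : ℝ) * (n + 1)) * legP n := by
  rw [legP, derivative_smul, mul_smul_comm, derivative_smul,
    ← Function.iterate_succ_apply' derivative, derivative_X_sq_sub_X_mul_iterate_derivative,
    mul_smul_comm]

theorem legP_eq_derivative {n : ℕ} (hn : n ≠ 0) :
    legP n = derivative (C ((n : ℝ) * (n + 1))⁻¹ * ((X ^ 2 - X) * derivative (legP n))) := by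
  have hne : (n : ℝ) * (n + 1) ≠ 0 := by positivity
  rw [derivative_C_mul, derivative_X_sq_sub_X_mul_derivative_legP, ← mul_assoc, ← C_mul,
    inv_mul_cancel₀ hne, C_1, one_mul]

theorem intervalIntegral_eval_derivative (p : ℝ[X]) (a b : ℝ) :
    ∫ t in a..b, (derivative p).eval t = p.eval b - p.eval a :=
  intervalIntegral.integral_eq_sub_of_hasDerivAt (fun t _ ↦ p.hasDerivAt t)
    (p.derivative.continuous.intervalIntegrable a b)

theorem legG_eq_xxm1_deriv (q : ℕ) (hq : 2 ≤ q) (x : ℝ) :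
    legG q x = (1 / ((q : ℝ) * ((q : ℝ) - 1))) *
      (x * (x - 1) * (Polynomial.derivative (legP (q - 1))).eval x) := by
  obtain ⟨n, rfl⟩ : ∃ n, q = n + 1 := ⟨q - 1, by omega⟩
  have hn : n ≠ 0 := by omega
  rw [legG, Nat.add_sub_cancel]
  conv_lhs => rw [legP_eq_derivative hn, intervalIntegral_eval_derivative]
  simp only [eval_mul, eval_C, eval_sub, eval_pow, eval_X]
  push_cast
  ring
end

section
/- For the polynomials G_{q+1}(x) = ∫₀ˣ P_q(t) dt with q ≥ 2 and any natural number ℓ, one has ∫₀¹ G_{q+1}(x) P'_ℓ(x) dx = -δ_{ℓq}/(2q+1); moreover ∫₀¹ G_1(x) P'_ℓ(x) dx = 1 for all ℓ ≥ 1, where G_1(x) = x. -/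
/-!
Integrating by parts, `∫₀¹ G_{q+1} P_ℓ' = [G_{q+1} P_ℓ]₀¹ - ∫₀¹ P_q P_ℓ`, and `G_{q+1}` vanishes at
both ends because `P_q ⊥ 1`. So everything reduces to the orthogonality of the `P_q`: by Rodrigues'
formula, `q` integrations by parts move the derivatives of `xᵠ(x-1)ᵠ` onto the other factor (the
boundary terms vanish since `xᵠ(x-1)ᵠ` has zeros of order `q` at `0` and `1`), which kills every
polynomial of degree `< q`, and the norm `1/(2q+1)` comes from the beta integral
`∫₀¹ xᵠ(x-1)ᵠ = (-1)ᵠ q!²/(2q+1)!`. For `G_1(x) = x` the same integration by parts gives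
`P_ℓ(1) - ∫₀¹ P_ℓ = 1`.
-/

open Polynomial intervalIntegral
open scoped Nat

section IntegrationByParts

variable {a b : ℝ}

theorem integral_eval_mul_eval_derivative (g p : ℝ[X]) :
    ∫ x in a..b, g.eval x * (derivative p).eval x =
      g.eval b * p.eval b - g.eval a * p.eval a - ∫ x in a..b, (derivative g).eval x * p.eval x :=
  integral_mul_deriv_eq_deriv_mul (fun x _ => g.hasDerivAt x) (fun x _ => p.hasDerivAt x)
    ((derivative g).continuous.intervalIntegrable a b)
    ((derivative p).continuous.intervalIntegrable a b)

theorem integral_eval_mul_eval_iterate_derivative {p : ℝ[X]} {k : ℕ}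
    (ha : ∀ m < k, (derivative^[m] p).eval a = 0) (hb : ∀ m < k, (derivative^[m] p).eval b = 0)
    (g : ℝ[X]) :
    ∫ x in a..b, g.eval x * (derivative^[k] p).eval x =
      (-1) ^ k * ∫ x in a..b, (derivative^[k] g).eval x * p.eval x := by
  induction k generalizing g with
  | zero => simp
  | succ k ih =>
    rw [Function.iterate_succ_apply', integral_eval_mul_eval_derivative, ha k k.lt_succ_self,
      hb k k.lt_succ_self, ih (fun m hm => ha m (hm.trans k.lt_succ_self))
        (fun m hm => hb m (hm.trans k.lt_succ_self)), ← Function.iterate_succ_apply]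
    ring

end IntegrationByParts

theorem integral_pow_mul_sub_one_pow (i j : ℕ) :
    ∫ x in (0:ℝ)..1, x ^ i * (x - 1) ^ j = (-1) ^ j * i ! * j ! / (i + j + 1)! := by
  induction j generalizing i with
  | zero =>
    simp only [pow_zero, mul_one, integral_pow, Nat.factorial_succ]
    field_simp
    norm_num
  | succ j ih =>
    have hsplit (x : ℝ) :
        x ^ i * (x - 1) ^ (j + 1) = x ^ (i + 1) * (x - 1) ^ j - x ^ i * (x - 1) ^ j := by
      ring
    simp_rw [hsplit]
    rw [integral_sub (by apply Continuous.intervalIntegrable; fun_prop)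
      (by apply Continuous.intervalIntegrable; fun_prop), ih, ih,
      show i + 1 + j + 1 = i + j + 1 + 1 by ring, show i + (j + 1) + 1 = i + j + 1 + 1 by ring]
    simp only [Nat.factorial_succ]
    push_cast
    field_simp
    ring

theorem Polynomial.Monic.iterate_derivative_natDegree {R : Type*} [Semiring R] {p : R[X]}
    (hp : p.Monic) : derivative^[p.natDegree] p = C (p.natDegree ! : R) := by
  have hdeg : (derivative^[p.natDegree] p).natDegree = 0 := by
    simpa using natDegree_iterate_derivative p p.natDegree
  rw [eq_C_of_natDegree_eq_zero hdeg, coeff_iterate_derivative, zero_add,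
    Nat.descFactorial_self, hp.coeff_natDegree, nsmul_one]

noncomputable def rodrigues (q : ℕ) : ℝ[X] := X ^ q * (X - 1) ^ q

theorem rodrigues_monic (q : ℕ) : (rodrigues q).Monic :=
  (monic_X_pow q).mul (by simpa only [map_one] using (monic_X_sub_C (1 : ℝ)).pow q)

theorem natDegree_rodrigues (q : ℕ) : (rodrigues q).natDegree = 2 * q := by
  unfold rodrigues
  compute_degree! <;> omega

theorem iterate_derivative_rodrigues_eval_zero {m q : ℕ} (hm : m < q) :
    (derivative^[m] (rodrigues q)).eval 0 = 0 := by
  obtain ⟨r, hr⟩ := pow_sub_dvd_iterate_derivative_of_pow_dvd m (dvd_mul_right (X ^ q : ℝ[X]) _)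
  rw [rodrigues, hr, eval_mul, eval_pow, eval_X, zero_pow (Nat.sub_ne_zero_of_lt hm), zero_mul]

theorem iterate_derivative_rodrigues_eval_one {m q : ℕ} (hm : m < q) :
    (derivative^[m] (rodrigues q)).eval 1 = 0 := by
  obtain ⟨r, hr⟩ :=
    pow_sub_dvd_iterate_derivative_of_pow_dvd m (dvd_mul_left ((X - 1) ^ q : ℝ[X]) _)
  rw [rodrigues, hr, eval_mul, eval_pow, eval_sub, eval_X, eval_one, sub_self,
    zero_pow (Nat.sub_ne_zero_of_lt hm), zero_mul]

theorem legP_eq_smul_rodrigues (q : ℕ) :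
    legP q = (q ! : ℝ)⁻¹ • derivative^[q] (rodrigues q) := rfl

theorem natDegree_legP_le (q : ℕ) : (legP q).natDegree ≤ q := by
  rw [legP_eq_smul_rodrigues]
  refine (natDegree_smul_le _ _).trans <| (natDegree_iterate_derivative _ _).trans ?_
  rw [natDegree_rodrigues]
  omega

theorem iterate_derivative_legP_self (q : ℕ) :
    derivative^[q] (legP q) = C ((2 * q)! / q ! : ℝ) := by
  rw [legP_eq_smul_rodrigues, iterate_derivative_smul, ← Function.iterate_add_apply,
    ← two_mul, ← natDegree_rodrigues, (rodrigues_monic q).iterate_derivative_natDegree,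
    natDegree_rodrigues, smul_C, smul_eq_mul, inv_mul_eq_div]

theorem integral_mul_legP (g : ℝ[X]) (q : ℕ) :
    ∫ x in (0:ℝ)..1, g.eval x * (legP q).eval x =
      (-1) ^ q / q ! * ∫ x in (0:ℝ)..1, (derivative^[q] g).eval x * (rodrigues q).eval x := by
  simp_rw [legP_eq_smul_rodrigues, eval_smul, smul_eq_mul, mul_left_comm _ (q ! : ℝ)⁻¹,
    integral_const_mul]
  rw [integral_eval_mul_eval_iterate_derivative
    (fun m hm => iterate_derivative_rodrigues_eval_zero hm)
    (fun m hm => iterate_derivative_rodrigues_eval_one hm)]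
  ring

theorem integral_mul_legP_eq_zero {g : ℝ[X]} {q : ℕ} (hg : g.natDegree < q) :
    ∫ x in (0:ℝ)..1, g.eval x * (legP q).eval x = 0 := by
  simp [integral_mul_legP, iterate_derivative_eq_zero hg]

theorem integral_legP_mul_self (q : ℕ) :
    ∫ x in (0:ℝ)..1, (legP q).eval x * (legP q).eval x = 1 / (2 * q + 1) := by
  simp_rw [integral_mul_legP, iterate_derivative_legP_self, eval_C, rodrigues, eval_mul, eval_pow,
    eval_sub, eval_X, eval_one, integral_const_mul, integral_pow_mul_sub_one_pow,
    show q + q + 1 = 2 * q + 1 by ring, Nat.factorial_succ]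
  push_cast
  field_simp
  rw [← pow_mul, mul_comm, pow_mul, neg_one_sq, one_pow]

theorem integral_legP_mul_legP (q l : ℕ) :
    ∫ x in (0:ℝ)..1, (legP q).eval x * (legP l).eval x =
      if l = q then 1 / (2 * (q : ℝ) + 1) else 0 := by
  rcases lt_trichotomy l q with hlq | rfl | hql
  · rw [if_neg hlq.ne]
    simp_rw [mul_comm (eval _ (legP q))]
    exact integral_mul_legP_eq_zero ((natDegree_legP_le l).trans_lt hlq)
  · rw [if_pos rfl, integral_legP_mul_self]
  · rw [if_neg hql.ne', integral_mul_legP_eq_zero ((natDegree_legP_le q).trans_lt hql)]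

theorem legP_zero : legP 0 = 1 := by
  simp [legP]

theorem legP_eval_one (q : ℕ) : (legP q).eval 1 = 1 := by
  -- by Leibniz, only the term differentiating `(X - 1) ^ q` all `q` times survives at `x = 1`
  have hsurvivor : ∀ k ∈ Finset.range (q + 1), k ≠ q →
      (q.choose k • (derivative^[q - k] (X ^ q : ℝ[X]) * derivative^[k] ((X - C 1) ^ q))).eval 1
        = 0 := by
    intro k hk hkq
    have hkq : q - k ≠ 0 := Nat.sub_ne_zero_of_lt <|
      (Finset.mem_range_succ_iff.mp hk).lt_of_ne hkq
    rw [iterate_derivative_X_sub_pow]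
    simp [zero_pow hkq]
  rw [legP, ← C_1, iterate_derivative_mul, eval_smul, eval_finsetSum,
    Finset.sum_eq_single_of_mem q (Finset.self_mem_range_succ q) hsurvivor,
    iterate_derivative_X_sub_pow_self]
  simp [inv_mul_cancel₀ (Nat.cast_ne_zero.mpr q.factorial_ne_zero : (q ! : ℝ) ≠ 0)]

theorem hasDerivAt_legG_succ (q : ℕ) (x : ℝ) : HasDerivAt (legG (q + 1)) ((legP q).eval x) x :=
  integral_hasDerivAt_right ((legP q).continuous.intervalIntegrable 0 x)
    ((legP q).continuous.stronglyMeasurableAtFilter _ _) (legP q).continuous.continuousAt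

theorem integral_legP_eq_zero {q : ℕ} (hq : 1 ≤ q) : ∫ x in (0:ℝ)..1, (legP q).eval x = 0 := by
  simpa using integral_mul_legP_eq_zero (g := 1) (natDegree_one.trans_lt hq)

theorem legG_succ_one {q : ℕ} (hq : 1 ≤ q) : legG (q + 1) 1 = 0 :=
  integral_legP_eq_zero hq

theorem legG_zero (q : ℕ) : legG q 0 = 0 :=
  integral_same

theorem legG_one : legG 1 = id := by
  ext x
  simp [legG, legP_zero]

theorem legG_legendre_deriv_biorthogonality :
    (∀ q l : ℕ, 2 ≤ q →
      ∫ x in (0:ℝ)..1, legG (q + 1) x * (Polynomial.derivative (legP l)).eval x =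
        -(if l = q then 1 / (2 * (q : ℝ) + 1) else 0)) ∧
    (∀ l : ℕ, 1 ≤ l →
      ∫ x in (0:ℝ)..1, legG 1 x * (Polynomial.derivative (legP l)).eval x = 1) := by
  refine ⟨fun q l hq => ?_, fun l hl => ?_⟩
  · rw [integral_mul_deriv_eq_deriv_mul (fun x _ => hasDerivAt_legG_succ q x)
      (fun x _ => (legP l).hasDerivAt x) ((legP q).continuous.intervalIntegrable 0 1)
      ((derivative (legP l)).continuous.intervalIntegrable 0 1),
      legG_succ_one (by omega), legG_zero, integral_legP_mul_legP]
    ring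
  · rw [legG_one, integral_mul_deriv_eq_deriv_mul (fun x _ => hasDerivAt_id x)
      (fun x _ => (legP l).hasDerivAt x) intervalIntegrable_const
      ((derivative (legP l)).continuous.intervalIntegrable 0 1)]
    simp [legP_eval_one, integral_legP_eq_zero hl]
end

section
/- Let b ∈ ℝˢ, c ∈ ℝˢ satisfy the quadrature conditions ∑ᵢ bᵢ cᵢ^{k-1} = 1/k for k = 1,…,m. Then the matrix A = c bᵀ satisfies the double bush conditions: p bᵀ C^{p-1} A c^q − q bᵀ C^{q-1} A c^p = 1/(q+1) − 1/(p+1) for all 1 ≤ p < q ≤ m−1, where C = diag(c) and powers of c are componentwise. -/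
/-- The AVF Runge–Kutta matrix `A = c bᵀ` satisfies the double bush conditions. -/
theorem avf_satisfies_double_bush (s m : ℕ) (b c : Fin s → ℝ)
    (hquad : ∀ k : ℕ, 1 ≤ k → k ≤ m → ∑ i, b i * c i ^ (k - 1) = 1 / (k : ℝ)) :
    ∀ p q : ℕ, 1 ≤ p → p < q → q ≤ m - 1 →
      (p : ℝ) * (∑ i, ∑ j, b i * c i ^ (p - 1) * (c i * b j) * c j ^ q) -
      (q : ℝ) * (∑ i, ∑ j, b i * c i ^ (q - 1) * (c i * b j) * c j ^ p) =
      1 / ((q : ℝ) + 1) - 1 / ((p : ℝ) + 1) := by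
  intro p q hp hpq hqm
  have hq1 : 1 ≤ q := le_of_lt (lt_of_le_of_lt hp hpq)
  have hm : q + 1 ≤ m := by omega
  have factor : ∀ r t : ℕ, 1 ≤ r →
      (∑ i, ∑ j, b i * c i ^ (r - 1) * (c i * b j) * c j ^ t)
        = (∑ i, b i * c i ^ r) * (∑ j, b j * c j ^ t) := by
    intro r t hr
    rw [Finset.sum_mul_sum]
    refine Finset.sum_congr rfl fun i _ => Finset.sum_congr rfl fun j _ => ?_
    have : c i ^ (r - 1) * c i = c i ^ r := by
      rw [← pow_succ]; congr 1; omega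
    linear_combination (b i * b j * c j ^ t) * this
  have key : ∀ r : ℕ, 1 ≤ r → r + 1 ≤ m →
      (∑ i, b i * c i ^ r) = 1 / ((r : ℝ) + 1) := by
    intro r hr hrm
    have := hquad (r + 1) (by omega) hrm
    simpa using this
  rw [factor p q hp, factor q p hq1,
      key p hp (by omega), key q hq1 hm]
  have hp0 : ((p : ℝ) + 1) ≠ 0 := by positivity
  have hq0 : ((q : ℝ) + 1) ≠ 0 := by positivity
  field_simp
  ring
end

section
/- Let (A,b,c) satisfy the quadrature conditions ∑ᵢ bᵢcᵢ^{k-1} = 1/k for 1 ≤ k ≤ m and the double bush conditions p bᵀC^{p-1}Ac^q − q bᵀC^{q-1}Ac^p = 1/(q+1) − 1/(p+1) for 1 ≤ p < q ≤ m−1. Then for all polynomials P of degree ≤ p ≤ m−1 and Q of degree ≤ q ≤ m−1 with P(0) = Q(0) = 0, one has bᵀP'(C)AQ(c) − bᵀQ'(C)AP(c) = P(1)∫₀¹Q(t)dt − Q(1)∫₀¹P(t)dt. -/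
/-!
Both sides of the identity are antisymmetrizations of bilinear forms in `(P, Q)`. Since
`P(0) = Q(0) = 0`, `P` and `Q` are combinations of monomials `X ^ k` with `1 ≤ k ≤ m - 1`, so it
suffices to compare the two forms on pairs of such monomials; there the identity is the double bush
condition (read with `p` and `q` swapped when `k > l`, and trivial when `k = l`).
-/

open Finset Polynomial

namespace Polynomial

variable {R M : Type*} [CommSemiring R] [AddCommMonoid M] [Module R M]

theorem linearMap_eq_zero_of_X_pow {f : R[X] →ₗ[R] M} {n : ℕ}
    (hf : ∀ k, 1 ≤ k → k ≤ n → f (X ^ k) = 0) {P : R[X]} (hP : P.natDegree ≤ n)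
    (hP0 : P.coeff 0 = 0) : f P = 0 := by
  rw [P.as_sum_range' (n + 1) (Nat.lt_succ_of_le hP), map_sum]
  refine sum_eq_zero fun k hk => ?_
  rcases Nat.eq_zero_or_pos k with rfl | hk1
  · simp [hP0]
  · rw [← smul_X_eq_monomial, map_smul, hf k hk1 (Nat.lt_succ_iff.mp (mem_range.mp hk)), smul_zero]

theorem bilinMap_eq_zero_of_X_pow {B : R[X] →ₗ[R] R[X] →ₗ[R] M} {p q : ℕ}
    (hB : ∀ k l, 1 ≤ k → k ≤ p → 1 ≤ l → l ≤ q → B (X ^ k) (X ^ l) = 0)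
    {P Q : R[X]} (hP : P.natDegree ≤ p) (hP0 : P.coeff 0 = 0)
    (hQ : Q.natDegree ≤ q) (hQ0 : Q.coeff 0 = 0) : B P Q = 0 :=
  linearMap_eq_zero_of_X_pow (f := B.flip Q)
    (fun k hk hkp => linearMap_eq_zero_of_X_pow (hB k · hk hkp) hQ hQ0) hP hP0

end Polynomial

section

variable {s : ℕ}

noncomputable def bushForm (b c : Fin s → ℝ) (A : Matrix (Fin s) (Fin s) ℝ) :
    ℝ[X] →ₗ[ℝ] ℝ[X] →ₗ[ℝ] ℝ :=
  LinearMap.mk₂ ℝ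
    (fun P Q => ∑ i, ∑ j, b i * (derivative P).eval (c i) * A i j * Q.eval (c j))
    (fun P P' Q => by simp only [map_add, eval_add, add_mul, mul_add, sum_add_distrib])
    (fun a P Q => by
      simp only [map_smul, eval_smul, smul_eq_mul, mul_sum]
      exact sum_congr rfl fun i _ => sum_congr rfl fun j _ => by ring)
    (fun P Q Q' => by simp only [eval_add, mul_add, sum_add_distrib])
    (fun a P Q => by
      simp only [eval_smul, smul_eq_mul, mul_sum]
      exact sum_congr rfl fun i _ => sum_congr rfl fun j _ => by ring)

noncomputable def boundaryForm : ℝ[X] →ₗ[ℝ] ℝ[X] →ₗ[ℝ] ℝ :=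
  LinearMap.mk₂ ℝ (fun P Q => P.eval 1 * ∫ t in (0 : ℝ)..1, Q.eval t)
    (fun P P' Q => by rw [eval_add, add_mul])
    (fun a P Q => by rw [eval_smul, smul_eq_mul, smul_eq_mul, mul_assoc])
    (fun P Q Q' => by
      simp only [eval_add]
      rw [intervalIntegral.integral_add (Q.continuous.intervalIntegrable _ _)
        (Q'.continuous.intervalIntegrable _ _), mul_add])
    (fun a P Q => by
      simp only [eval_smul, smul_eq_mul, intervalIntegral.integral_const_mul]; ring)

theorem bushForm_X_pow (b c : Fin s → ℝ) (A : Matrix (Fin s) (Fin s) ℝ) (k l : ℕ) :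
    bushForm b c A (X ^ k) (X ^ l) = k * ∑ i, ∑ j, b i * c i ^ (k - 1) * A i j * c j ^ l := by
  simp only [bushForm, LinearMap.mk₂_apply, derivative_X_pow, eval_mul, eval_C, eval_pow, eval_X,
    mul_sum]
  exact sum_congr rfl fun i _ => sum_congr rfl fun j _ => by ring

theorem boundaryForm_X_pow (k l : ℕ) : boundaryForm (X ^ k) (X ^ l) = 1 / (l + 1) := by
  simp [boundaryForm]

end

theorem double_bush_polynomial_form_general (s m : ℕ) (b c : Fin s → ℝ)
    (A : Matrix (Fin s) (Fin s) ℝ)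
    (hdb : ∀ p q : ℕ, 1 ≤ p → p < q → q ≤ m - 1 →
      (p : ℝ) * (∑ i, ∑ j, b i * c i ^ (p - 1) * A i j * c j ^ q) -
      (q : ℝ) * (∑ i, ∑ j, b i * c i ^ (q - 1) * A i j * c j ^ p) =
      1 / ((q : ℝ) + 1) - 1 / ((p : ℝ) + 1))
    (p q : ℕ) (hp : p ≤ m - 1) (hq : q ≤ m - 1)
    (P Q : Polynomial ℝ) (hPd : P.natDegree ≤ p) (hQd : Q.natDegree ≤ q)
    (hP0 : P.eval 0 = 0) (hQ0 : Q.eval 0 = 0) :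
    (∑ i, ∑ j, b i * (Polynomial.derivative P).eval (c i) * A i j * Q.eval (c j)) -
    (∑ i, ∑ j, b i * (Polynomial.derivative Q).eval (c i) * A i j * P.eval (c j)) =
    P.eval 1 * (∫ t in (0:ℝ)..1, Q.eval t) - Q.eval 1 * (∫ t in (0:ℝ)..1, P.eval t) := by
  have hmono : ∀ k l, 1 ≤ k → k ≤ m - 1 → 1 ≤ l → l ≤ m - 1 →
      bushForm b c A (X ^ k) (X ^ l) - bushForm b c A (X ^ l) (X ^ k) =
        boundaryForm (X ^ k) (X ^ l) - boundaryForm (X ^ l) (X ^ k) := by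
    intro k l hk hkm hl hlm
    rw [bushForm_X_pow, bushForm_X_pow, boundaryForm_X_pow, boundaryForm_X_pow]
    rcases lt_trichotomy k l with hkl | rfl | hlk
    · exact hdb k l hk hkl hlm
    · ring
    · linarith [hdb l k hl hlk hkm]
  have key := bilinMap_eq_zero_of_X_pow
    (B := bushForm b c A - (bushForm b c A).flip - (boundaryForm - boundaryForm.flip))
    (fun k l hk hkp hl hlq => by
      simpa [sub_eq_zero] using hmono k l hk (hkp.trans hp) hl (hlq.trans hq))
    hPd (by rwa [coeff_zero_eq_eval_zero]) hQd (by rwa [coeff_zero_eq_eval_zero])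
  simpa [sub_eq_zero, bushForm, boundaryForm] using key

/-- The double bush conditions in polynomial form. -/
theorem double_bush_polynomial_form (s m : ℕ) (b c : Fin s → ℝ)
    (A : Matrix (Fin s) (Fin s) ℝ)
    (hquad : ∀ k : ℕ, 1 ≤ k → k ≤ m → ∑ i, b i * c i ^ (k - 1) = 1 / (k : ℝ))
    (hdb : ∀ p q : ℕ, 1 ≤ p → p < q → q ≤ m - 1 →
      (p : ℝ) * (∑ i, ∑ j, b i * c i ^ (p - 1) * A i j * c j ^ q) -
      (q : ℝ) * (∑ i, ∑ j, b i * c i ^ (q - 1) * A i j * c j ^ p) =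
      1 / ((q : ℝ) + 1) - 1 / ((p : ℝ) + 1))
    (p q : ℕ) (hp : p ≤ m - 1) (hq : q ≤ m - 1)
    (P Q : Polynomial ℝ) (hPd : P.natDegree ≤ p) (hQd : Q.natDegree ≤ q)
    (hP0 : P.eval 0 = 0) (hQ0 : Q.eval 0 = 0) :
    (∑ i, ∑ j, b i * (Polynomial.derivative P).eval (c i) * A i j * Q.eval (c j)) -
    (∑ i, ∑ j, b i * (Polynomial.derivative Q).eval (c i) * A i j * P.eval (c j)) =
    P.eval 1 * (∫ t in (0:ℝ)..1, Q.eval t) - Q.eval 1 * (∫ t in (0:ℝ)..1, P.eval t) :=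
  double_bush_polynomial_form_general s m b c A hdb p q hp hq P Q hPd hQd hP0 hQ0
end

section
/- Let b, c ∈ ℝˢ satisfy the quadrature conditions ∑ᵢ bᵢcᵢ^{k-1} = 1/k for 1 ≤ k ≤ m. Then the matrix N₁ = (𝟏 − c) bᵀ satisfies the homogeneous double bush conditions: p bᵀ C^{p-1} N₁ c^q − q bᵀ C^{q-1} N₁ c^p = 0 for all 1 ≤ p < q ≤ m−1. -/
/-- The matrix `N₁ = (𝟏 - c) bᵀ` satisfies the homogeneous double bush conditions. -/
theorem N1_in_kernel (s m : ℕ) (b c : Fin s → ℝ)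
    (hquad : ∀ k : ℕ, 1 ≤ k → k ≤ m → ∑ i, b i * c i ^ (k - 1) = 1 / (k : ℝ)) :
    ∀ p q : ℕ, 1 ≤ p → p < q → q ≤ m - 1 →
      (p : ℝ) * (∑ i, ∑ j, b i * c i ^ (p - 1) * ((1 - c i) * b j) * c j ^ q) -
      (q : ℝ) * (∑ i, ∑ j, b i * c i ^ (q - 1) * ((1 - c i) * b j) * c j ^ p) = 0 := by
  intro p q hp hpq hq
  have key : ∀ r t : ℕ,
      (∑ i, ∑ j, b i * c i ^ r * ((1 - c i) * b j) * c j ^ t)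
      = ((∑ i, b i * c i ^ r) - ∑ i, b i * c i ^ (r + 1)) * (∑ j, b j * c j ^ t) := by
    intro r t
    rw [← Finset.sum_sub_distrib, Finset.sum_mul]
    refine Finset.sum_congr rfl fun i _ => ?_
    rw [Finset.mul_sum]
    refine Finset.sum_congr rfl fun j _ => ?_
    rw [pow_succ]; ring
  have hm : q + 1 ≤ m := by omega
  have hp1 : p - 1 + 1 = p := by omega
  have hq1 : q - 1 + 1 = q := by omega
  have e1 : ∑ i, b i * c i ^ (p - 1) = 1 / (p : ℝ) := hquad p hp (by omega)
  have e2 : ∑ i, b i * c i ^ p = 1 / ((p : ℝ) + 1) := by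
    have := hquad (p + 1) (by omega) (by omega)
    simpa using this
  have e3 : ∑ i, b i * c i ^ (q - 1) = 1 / (q : ℝ) := hquad q (by omega) (by omega)
  have e4 : ∑ i, b i * c i ^ q = 1 / ((q : ℝ) + 1) := by
    have := hquad (q + 1) (by omega) (by omega)
    simpa using this
  rw [key (p - 1) q, key (q - 1) p, hp1, hq1, e1, e2, e3, e4]
  have hpne : (p : ℝ) ≠ 0 := Nat.cast_ne_zero.mpr (by omega)
  have hqne : (q : ℝ) ≠ 0 := Nat.cast_ne_zero.mpr (by omega)
  have hpne1 : (p : ℝ) + 1 ≠ 0 := by positivity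
  have hqne1 : (q : ℝ) + 1 ≠ 0 := by positivity
  field_simp
  ring
end

section
/- Let c₁,…,c_s be the zeros of P_s − ζ P_{s−1} on [0,1] (assumed distinct) with weights b making the rule exact for polynomials of degree ≤ 2s−1. Then for 1 ≤ r ≤ s−1: ⟨P_{s+r−1}, P_{s−r}⟩_D = (γ_{s+r−1} γ_{s−r} / (γ_s γ_{s−1})) · ζ/(2s−1). -/
/-- `γ_ℓ = (2ℓ)!/(ℓ!)²`, the leading coefficient of `P_ℓ`. -/
noncomputable def legGamma (l : ℕ) : ℝ :=
  (Nat.factorial (2 * l) : ℝ) / ((Nat.factorial l : ℝ) ^ 2)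

open Polynomial

theorem integral_pow_mul_one_sub_pow (a b : ℕ) :
    ∫ x in (0:ℝ)..1, x ^ a * (1 - x) ^ b =
      a.factorial * b.factorial / (a + b + 1).factorial := by
  have hB := Complex.Gamma_mul_Gamma_eq_betaIntegral (s := a + 1) (t := b + 1)
    (by simp; positivity) (by simp; positivity)
  have hcast : ((a:ℂ) + 1 + (b + 1)) = ((a + b + 1 : ℕ) : ℂ) + 1 := by push_cast; ring
  rw [hcast, Complex.Gamma_nat_eq_factorial, Complex.Gamma_nat_eq_factorial,
    Complex.Gamma_nat_eq_factorial, Complex.betaIntegral] at hB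
  simp only [add_sub_cancel_right, Complex.cpow_natCast] at hB
  norm_cast at hB
  rw [intervalIntegral.integral_ofReal] at hB
  norm_cast at hB
  rw [eq_div_iff (by positivity), mul_comm]
  exact_mod_cast hB.symm

theorem iterate_derivative_of_natDegree_le {R : Type*} [Semiring R] {p : R[X]} {n : ℕ}
    (hp : p.natDegree ≤ n) : derivative^[n] p = C (n.factorial * p.coeff n) := by
  rw [eq_C_of_natDegree_le_zero ((natDegree_iterate_derivative p n).trans (by omega)),
    coeff_iterate_derivative, zero_add, Nat.descFactorial_self, nsmul_eq_mul]

theorem natDegree_div_add_natDegree {K : Type*} [Field K] {p q : K[X]} (hq : q ≠ 0)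
    (hqp : q.natDegree ≤ p.natDegree) : (p / q).natDegree + q.natDegree = p.natDegree := by
  have hc : q.leadingCoeff⁻¹ ≠ 0 := inv_ne_zero (leadingCoeff_ne_zero.mpr hq)
  rw [div_def, natDegree_C_mul hc, natDegree_divByMonic _ (monic_mul_leadingCoeff_inv hq),
    natDegree_mul_C hc]
  omega

noncomputable def unitIntegral : ℝ[X] →ₗ[ℝ] ℝ where
  toFun p := ∫ x in (0:ℝ)..1, p.eval x
  map_add' p q := by
    simp only [eval_add]
    exact intervalIntegral.integral_add (p.continuous.intervalIntegrable _ _)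
      (q.continuous.intervalIntegrable _ _)
  map_smul' a p := by simp [intervalIntegral.integral_const_mul]

theorem unitIntegral_apply (p : ℝ[X]) : unitIntegral p = ∫ x in (0:ℝ)..1, p.eval x := rfl

theorem unitIntegral_derivative (p : ℝ[X]) :
    unitIntegral (derivative p) = p.eval 1 - p.eval 0 :=
  intervalIntegral.integral_eq_sub_of_hasDerivAt (fun x _ => p.hasDerivAt x)
    ((derivative p).continuous.intervalIntegrable _ _)

theorem unitIntegral_derivative_mul {u : ℝ[X]} (h0 : u.IsRoot 0) (h1 : u.IsRoot 1) (v : ℝ[X]) :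
    unitIntegral (derivative u * v) = -unitIntegral (u * derivative v) := by
  have h := unitIntegral_derivative (u * v)
  rw [derivative_mul, map_add] at h
  simp only [eval_mul, h0.eq_zero, h1.eq_zero, zero_mul, sub_self] at h
  linarith

theorem unitIntegral_iterate_derivative_mul {n : ℕ} {u : ℝ[X]} (h0 : n ≤ u.rootMultiplicity 0)
    (h1 : n ≤ u.rootMultiplicity 1) (v : ℝ[X]) :
    unitIntegral (derivative^[n] u * v) = (-1) ^ n * unitIntegral (u * derivative^[n] v) := by
  induction n generalizing v with
  | zero => simp
  | succ n ih =>
    rw [Function.iterate_succ_apply', unitIntegral_derivative_mul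
      (isRoot_iterate_derivative_of_lt_rootMultiplicity h0)
      (isRoot_iterate_derivative_of_lt_rootMultiplicity h1),
      ih (by omega) (by omega), Function.iterate_succ_apply]
    ring

noncomputable def rodriguesPoly (n : ℕ) : ℝ[X] := X ^ n * (X - 1) ^ n

theorem legP_eq_smul_iterate_derivative (n : ℕ) :
    legP n = (n.factorial : ℝ)⁻¹ • derivative^[n] (rodriguesPoly n) := rfl

theorem monic_X_sub_one_pow (n : ℕ) : ((X - 1 : ℝ[X]) ^ n).Monic := by
  simpa using (monic_X_sub_C (1 : ℝ)).pow n

theorem monic_rodriguesPoly (n : ℕ) : (rodriguesPoly n).Monic :=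
  (monic_X_pow n).mul (monic_X_sub_one_pow n)

theorem natDegree_rodriguesPoly (n : ℕ) : (rodriguesPoly n).natDegree = 2 * n := by
  rw [rodriguesPoly, (monic_X_pow n).natDegree_mul (monic_X_sub_one_pow n),
    ← C_1, natDegree_pow, natDegree_pow, natDegree_X_sub_C, natDegree_X]
  ring

theorem le_rootMultiplicity_zero_rodriguesPoly (n : ℕ) :
    n ≤ (rodriguesPoly n).rootMultiplicity 0 := by
  rw [le_rootMultiplicity_iff (monic_rodriguesPoly n).ne_zero, C_0, sub_zero]
  exact dvd_mul_right _ _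

theorem le_rootMultiplicity_one_rodriguesPoly (n : ℕ) :
    n ≤ (rodriguesPoly n).rootMultiplicity 1 := by
  rw [le_rootMultiplicity_iff (monic_rodriguesPoly n).ne_zero, C_1]
  exact dvd_mul_left _ _

theorem unitIntegral_rodriguesPoly (n : ℕ) :
    unitIntegral (rodriguesPoly n) = (-1) ^ n * (n.factorial ^ 2 / (2 * n + 1).factorial) := by
  rw [unitIntegral_apply, two_mul, sq, ← integral_pow_mul_one_sub_pow,
    ← intervalIntegral.integral_const_mul]
  refine intervalIntegral.integral_congr fun x _ => ?_
  simp only [rodriguesPoly, eval_mul, eval_pow, eval_X, eval_sub, eval_one]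
  rw [← neg_sub 1 x, neg_pow]
  ring

theorem legGamma_pos (n : ℕ) : 0 < legGamma n := by
  unfold legGamma
  positivity

theorem coeff_legP_self (n : ℕ) : (legP n).coeff n = legGamma n := by
  have hlead : (rodriguesPoly n).coeff (n + n) = 1 := by
    rw [← two_mul, ← natDegree_rodriguesPoly]
    exact monic_rodriguesPoly n
  have hfac : (n.factorial : ℝ) * (2 * n).descFactorial n = (2 * n).factorial := by
    rw [← Nat.cast_mul, ← Nat.factorial_mul_descFactorial (by omega : n ≤ 2 * n),
      show 2 * n - n = n by omega]
  rw [legP_eq_smul_iterate_derivative, coeff_smul, coeff_iterate_derivative, hlead, ← two_mul,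
    legGamma, ← hfac, nsmul_eq_mul, mul_one, smul_eq_mul]
  field_simp

theorem natDegree_legP (n : ℕ) : (legP n).natDegree = n := by
  refine le_antisymm ?_ (le_natDegree_of_ne_zero ?_)
  · rw [legP_eq_smul_iterate_derivative]
    refine (natDegree_smul_le _ _).trans ((natDegree_iterate_derivative _ _).trans ?_)
    rw [natDegree_rodriguesPoly]
    omega
  · rw [coeff_legP_self]
    exact (legGamma_pos n).ne'

theorem leadingCoeff_legP (n : ℕ) : (legP n).leadingCoeff = legGamma n := by
  rw [leadingCoeff, natDegree_legP, coeff_legP_self]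

theorem degree_legP (n : ℕ) : (legP n).degree = n := by
  rw [degree_eq_natDegree (leadingCoeff_ne_zero.mp ((leadingCoeff_legP n).trans_ne
    (legGamma_pos n).ne')), natDegree_legP]

theorem unitIntegral_legP_mul {n : ℕ} {g : ℝ[X]} (hg : g.natDegree ≤ n) :
    unitIntegral (legP n * g) = g.coeff n / (legGamma n * (2 * n + 1)) := by
  rw [legP_eq_smul_iterate_derivative, smul_mul_assoc, map_smul, unitIntegral_iterate_derivative_mul
    (le_rootMultiplicity_zero_rodriguesPoly n) (le_rootMultiplicity_one_rodriguesPoly n),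
    iterate_derivative_of_natDegree_le hg, mul_comm (rodriguesPoly n), ← smul_eq_C_mul, map_smul,
    unitIntegral_rodriguesPoly, legGamma, Nat.factorial_succ]
  have hsign : (-1 : ℝ) ^ n * (-1) ^ n = 1 := by rw [← mul_pow]; norm_num
  push_cast
  simp only [smul_eq_mul]
  field_simp
  linear_combination g.coeff n * hsign

theorem unitIntegral_legP_mul_of_natDegree_lt {n : ℕ} {g : ℝ[X]} (hg : g.natDegree < n) :
    unitIntegral (legP n * g) = 0 := by
  rw [unitIntegral_legP_mul hg.le, coeff_eq_zero_of_natDegree_lt hg, zero_div]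

theorem sum_mul_eval_eq_unitIntegral_mod_mul {s : ℕ} {M : ℝ[X]} {b c : Fin s → ℝ}
    (hM : M.degree = s) (hroot : ∀ i, M.eval (c i) = 0)
    (hexact : ∀ P : ℝ[X], P.natDegree ≤ 2 * s - 1 →
      ∑ i, b i * P.eval (c i) = unitIntegral P)
    (f : ℝ[X]) {g : ℝ[X]} (hg : g.natDegree ≤ s) :
    ∑ i, b i * f.eval (c i) * g.eval (c i) = unitIntegral (f % M * g) := by
  have hM0 : M ≠ 0 := ne_zero_of_coe_le_degree hM.ge
  have hmod : (f % M).natDegree + g.natDegree ≤ 2 * s - 1 := by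
    rcases eq_or_ne (f % M) 0 with h0 | h0
    · rw [h0, natDegree_zero]
      omega
    · have := natDegree_lt_natDegree h0 (degree_mod_lt f hM0)
      rw [natDegree_eq_of_degree_eq_some hM] at this
      omega
  rw [← hexact _ (natDegree_mul_le.trans hmod)]
  refine Finset.sum_congr rfl fun i _ => ?_
  rw [eval_mul, mul_assoc, EuclideanDomain.mod_eq_sub_mul_div, eval_sub, eval_mul, hroot i,
    zero_mul, sub_zero]

theorem degree_C_mul_legP_lt_degree_legP_succ (n : ℕ) (ζ : ℝ) :
    (C ζ * legP n).degree < (legP (n + 1)).degree := by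
  rw [← smul_eq_C_mul, degree_legP]
  exact (degree_smul_le _ _).trans_lt (by rw [degree_legP]; exact_mod_cast n.lt_succ_self)

theorem degree_legP_succ_sub_C_mul_legP (n : ℕ) (ζ : ℝ) :
    (legP (n + 1) - C ζ * legP n).degree = ↑(n + 1) := by
  rw [degree_sub_eq_left_of_degree_lt (degree_C_mul_legP_lt_degree_legP_succ n ζ), degree_legP]

theorem leadingCoeff_legP_succ_sub_C_mul_legP (n : ℕ) (ζ : ℝ) :
    (legP (n + 1) - C ζ * legP n).leadingCoeff = legGamma (n + 1) := by
  rw [leadingCoeff_sub_of_degree_lt (degree_C_mul_legP_lt_degree_legP_succ n ζ),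
    leadingCoeff_legP]

theorem unitIntegral_legP_mod_mul_legP {n r : ℕ} (hr1 : 1 ≤ r) (hr : r ≤ n + 1) (ζ : ℝ) :
    unitIntegral (legP (n + r) % (legP (n + 1) - C ζ * legP n) * legP (n + 1 - r)) =
      legGamma (n + r) * legGamma (n + 1 - r) / (legGamma (n + 1) * legGamma n) *
        (ζ / (2 * n + 1)) := by
  set M := legP (n + 1) - C ζ * legP n with hM
  have hMdeg : M.degree = ↑(n + 1) := degree_legP_succ_sub_C_mul_legP n ζ
  have hMlc : M.leadingCoeff = legGamma (n + 1) := leadingCoeff_legP_succ_sub_C_mul_legP n ζ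
  have hM0 : M ≠ 0 := ne_zero_of_coe_le_degree hMdeg.ge
  have hMnat : M.natDegree = n + 1 := natDegree_eq_of_degree_eq_some hMdeg
  set Q := legP (n + r) / M with hQ
  have hQdeg : Q.natDegree = r - 1 := by
    have h : Q.natDegree + M.natDegree = (legP (n + r)).natDegree :=
      natDegree_div_add_natDegree hM0 (by rw [hMnat, natDegree_legP]; omega)
    rw [natDegree_legP, hMnat] at h
    omega
  have hQlc : Q.leadingCoeff = legGamma (n + r) / legGamma (n + 1) := by
    rw [leadingCoeff_div (by rw [hMdeg, degree_legP]; exact_mod_cast (by omega : n + 1 ≤ n + r)),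
      leadingCoeff_legP, hMlc]
  set G := Q * legP (n + 1 - r) with hG
  have hGdeg : G.natDegree ≤ n :=
    natDegree_mul_le.trans (by rw [hQdeg, natDegree_legP]; omega)
  have hGcoeff : G.coeff n = legGamma (n + r) / legGamma (n + 1) * legGamma (n + 1 - r) := by
    have := coeff_mul_degree_add_degree Q (legP (n + 1 - r))
    rwa [hQdeg, natDegree_legP, show r - 1 + (n + 1 - r) = n by omega, hQlc,
      leadingCoeff_legP] at this
  have hsplit : legP (n + r) % M * legP (n + 1 - r) =
      legP (n + r) * legP (n + 1 - r) - legP (n + 1) * G + ζ • (legP n * G) := by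
    rw [EuclideanDomain.mod_eq_sub_mul_div, smul_eq_C_mul, hG, hQ, hM]
    ring
  rw [hsplit, map_add, map_sub, map_smul,
    unitIntegral_legP_mul_of_natDegree_lt (by rw [natDegree_legP]; omega),
    unitIntegral_legP_mul_of_natDegree_lt (hGdeg.trans_lt n.lt_succ_self),
    unitIntegral_legP_mul hGdeg, hGcoeff]
  have := (legGamma_pos (n + 1)).ne'
  have := (legGamma_pos n).ne'
  rw [sub_self, zero_add, smul_eq_mul]
  field_simp

theorem discrete_inner_product_zeta_general (s : ℕ) (ζ : ℝ) (b c : Fin s → ℝ)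
    (hzero : ∀ i, (legP s - Polynomial.C ζ * legP (s - 1)).eval (c i) = 0)
    (hexact : ∀ P : Polynomial ℝ, P.natDegree ≤ 2 * s - 1 →
      ∑ i, b i * P.eval (c i) = ∫ x in (0:ℝ)..1, P.eval x)
    (r : ℕ) (hr1 : 1 ≤ r) (hr2 : r ≤ s - 1) :
    ∑ i, b i * (legP (s + r - 1)).eval (c i) * (legP (s - r)).eval (c i) =
      (legGamma (s + r - 1) * legGamma (s - r) / (legGamma s * legGamma (s - 1))) *
        (ζ / (2 * (s : ℝ) - 1)) := by
  obtain ⟨n, rfl⟩ : ∃ n, s = n + 1 := ⟨s - 1, by omega⟩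
  rw [Nat.add_sub_cancel] at hzero ⊢
  rw [show n + 1 + r - 1 = n + r by omega,
    sum_mul_eval_eq_unitIntegral_mod_mul (degree_legP_succ_sub_C_mul_legP n ζ) hzero hexact _
      (by rw [natDegree_legP]; omega),
    unitIntegral_legP_mod_mul_legP hr1 (by omega)]
  push_cast
  ring

theorem discrete_inner_product_zeta (s : ℕ) (ζ : ℝ) (b c : Fin s → ℝ)
    (hdist : Function.Injective c)
    (hzero : ∀ i, (legP s - Polynomial.C ζ * legP (s - 1)).eval (c i) = 0)
    (hexact : ∀ P : Polynomial ℝ, P.natDegree ≤ 2 * s - 1 →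
      ∑ i, b i * P.eval (c i) = ∫ x in (0:ℝ)..1, P.eval x)
    (r : ℕ) (hr1 : 1 ≤ r) (hr2 : r ≤ s - 1) :
    ∑ i, b i * (legP (s + r - 1)).eval (c i) * (legP (s - r)).eval (c i) =
      (legGamma (s + r - 1) * legGamma (s - r) / (legGamma s * legGamma (s - 1))) *
        (ζ / (2 * (s : ℝ) - 1)) :=
  discrete_inner_product_zeta_general s ζ b c hzero hexact r hr1 hr2
end

section
/- Let (c,b) be the Gauss–Legendre quadrature with s stages (m = 2s, s ≥ 2). Any s×s matrix A satisfying the double bush conditions pbᵀC^{p−1}Ac^q − qbᵀC^{q−1}Ac^p = 1/(q+1) − 1/(p+1) for 1 ≤ p < q ≤ 2s−1, and the row sum condition A𝟏 = c, given that the solution set of the homogeneous conditions is spanned by (𝟏−c)bᵀ, must equal A = cbᵀ. -/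
/-- The even case `m = 2s`: with Gauss–Legendre quadrature, the only Runge–Kutta matrix
satisfying the double bush conditions and the row sum condition is the AVF matrix `cbᵀ`,
given that the homogeneous solutions are spanned by `(𝟏-c)bᵀ`. -/
theorem even_case_unique_AVF (s : ℕ) (hs : 2 ≤ s) (b c : Fin s → ℝ)
    (hzero : ∀ i, (legP s).eval (c i) = 0)
    (hdist : Function.Injective c)
    (hquad : ∀ k : ℕ, 1 ≤ k → k ≤ 2 * s → ∑ i, b i * c i ^ (k - 1) = 1 / (k : ℝ))
    (hker : ∀ N : Matrix (Fin s) (Fin s) ℝ,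
      (∀ p q : ℕ, 1 ≤ p → p < q → q ≤ 2 * s - 1 →
        (p : ℝ) * (∑ i, ∑ j, b i * c i ^ (p - 1) * N i j * c j ^ q) -
        (q : ℝ) * (∑ i, ∑ j, b i * c i ^ (q - 1) * N i j * c j ^ p) = 0) →
      ∃ β : ℝ, ∀ i j, N i j = β * ((1 - c i) * b j))
    (A : Matrix (Fin s) (Fin s) ℝ)
    (hdb : ∀ p q : ℕ, 1 ≤ p → p < q → q ≤ 2 * s - 1 →
      (p : ℝ) * (∑ i, ∑ j, b i * c i ^ (p - 1) * A i j * c j ^ q) -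
      (q : ℝ) * (∑ i, ∑ j, b i * c i ^ (q - 1) * A i j * c j ^ p) =
      1 / ((q : ℝ) + 1) - 1 / ((p : ℝ) + 1))
    (hrow : ∀ i, ∑ j, A i j = c i) :
    ∀ i j, A i j = c i * b j := by
  have hb1 : ∑ i, b i = 1 := by
    have h := hquad 1 le_rfl (by omega)
    simpa using h
  -- moments
  have hmom : ∀ p : ℕ, 1 ≤ p → p ≤ 2 * s - 1 →
      ∑ i, b i * c i ^ p = 1 / ((p : ℝ) + 1) := by
    intro p hp hp'
    have h := hquad (p + 1) (by omega) (by omega)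
    have : ((p + 1 : ℕ) : ℝ) = (p : ℝ) + 1 := by push_cast; ring
    simpa [this] using h
  set N : Matrix (Fin s) (Fin s) ℝ := fun i j => A i j - c i * b j with hN
  have key : ∀ p q : ℕ, 1 ≤ p → p < q → q ≤ 2 * s - 1 →
      ∑ i, ∑ j, b i * c i ^ (p - 1) * (c i * b j) * c j ^ q
        = (1 / ((p : ℝ) + 1)) * (1 / ((q : ℝ) + 1)) := by
    intro p q hp hpq hq
    have hq1 : 1 ≤ q := le_of_lt (lt_of_le_of_lt hp hpq)
    have hcp := hmom p hp (by omega)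
    have hcq := hmom q hq1 hq
    rw [← hcp, ← hcq, Finset.sum_mul_sum]
    refine Finset.sum_congr rfl fun i _ => Finset.sum_congr rfl fun j _ => ?_
    have hpow : c i ^ (p - 1) * c i = c i ^ p := by
      rw [← pow_succ]; congr 1; omega
    calc b i * c i ^ (p - 1) * (c i * b j) * c j ^ q
        = b i * (c i ^ (p - 1) * c i) * (b j * c j ^ q) := by ring
      _ = b i * c i ^ p * (b j * c j ^ q) := by rw [hpow]
  have hhom : ∀ p q : ℕ, 1 ≤ p → p < q → q ≤ 2 * s - 1 →
      (p : ℝ) * (∑ i, ∑ j, b i * c i ^ (p - 1) * N i j * c j ^ q) -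
      (q : ℝ) * (∑ i, ∑ j, b i * c i ^ (q - 1) * N i j * c j ^ p) = 0 := by
    intro p q hp hpq hq
    have hq1 : 1 ≤ q := le_of_lt (lt_of_le_of_lt hp hpq)
    have split1 : ∑ i, ∑ j, b i * c i ^ (p - 1) * N i j * c j ^ q
        = (∑ i, ∑ j, b i * c i ^ (p - 1) * A i j * c j ^ q)
          - (∑ i, ∑ j, b i * c i ^ (p - 1) * (c i * b j) * c j ^ q) := by
      rw [← Finset.sum_sub_distrib]
      refine Finset.sum_congr rfl fun i _ => ?_
      rw [← Finset.sum_sub_distrib]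
      refine Finset.sum_congr rfl fun j _ => ?_
      simp only [hN]; ring
    have split2 : ∑ i, ∑ j, b i * c i ^ (q - 1) * N i j * c j ^ p
        = (∑ i, ∑ j, b i * c i ^ (q - 1) * A i j * c j ^ p)
          - (∑ i, ∑ j, b i * c i ^ (q - 1) * (c i * b j) * c j ^ p) := by
      rw [← Finset.sum_sub_distrib]
      refine Finset.sum_congr rfl fun i _ => ?_
      rw [← Finset.sum_sub_distrib]
      refine Finset.sum_congr rfl fun j _ => ?_
      simp only [hN]; ring
    have key2 : ∑ i, ∑ j, b i * c i ^ (q - 1) * (c i * b j) * c j ^ p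
        = (1 / ((q : ℝ) + 1)) * (1 / ((p : ℝ) + 1)) := by
      have hcp := hmom p hp (by omega)
      have hcq := hmom q hq1 hq
      rw [← hcq, ← hcp, Finset.sum_mul_sum]
      refine Finset.sum_congr rfl fun i _ => Finset.sum_congr rfl fun j _ => ?_
      have hpow : c i ^ (q - 1) * c i = c i ^ q := by
        rw [← pow_succ]; congr 1; omega
      calc b i * c i ^ (q - 1) * (c i * b j) * c j ^ p
          = b i * (c i ^ (q - 1) * c i) * (b j * c j ^ p) := by ring
        _ = b i * c i ^ q * (b j * c j ^ p) := by rw [hpow]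
    rw [split1, split2, key p q hp hpq hq, key2]
    have hdbpq := hdb p q hp hpq hq
    have hp0 : ((p : ℝ) + 1) ≠ 0 := by positivity
    have hq0 : ((q : ℝ) + 1) ≠ 0 := by positivity
    have expand : (p : ℝ) * ((∑ i, ∑ j, b i * c i ^ (p - 1) * A i j * c j ^ q)
          - 1 / ((p : ℝ) + 1) * (1 / ((q : ℝ) + 1)))
        - (q : ℝ) * ((∑ i, ∑ j, b i * c i ^ (q - 1) * A i j * c j ^ p)
          - 1 / ((q : ℝ) + 1) * (1 / ((p : ℝ) + 1)))
        = ((p : ℝ) * (∑ i, ∑ j, b i * c i ^ (p - 1) * A i j * c j ^ q)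
          - (q : ℝ) * (∑ i, ∑ j, b i * c i ^ (q - 1) * A i j * c j ^ p))
          - ((p : ℝ) - (q : ℝ)) / (((p : ℝ) + 1) * ((q : ℝ) + 1)) := by
      field_simp
      ring
    rw [expand, hdbpq]
    field_simp
    ring
  obtain ⟨β, hβ⟩ := hker N hhom
  -- row sums of N are zero
  have hrowN : ∀ i, β * (1 - c i) = 0 := by
    intro i
    have h1 : ∑ j, N i j = 0 := by
      simp only [hN]
      rw [Finset.sum_sub_distrib, hrow, ← Finset.mul_sum, hb1, mul_one, sub_self]
    have h2 : ∑ j, N i j = β * (1 - c i) := by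
      calc ∑ j, N i j = ∑ j, β * ((1 - c i) * b j) := by
            refine Finset.sum_congr rfl fun j _ => hβ i j
        _ = β * (1 - c i) * ∑ j, b j := by
            rw [Finset.mul_sum]
            exact Finset.sum_congr rfl fun j _ => by ring
        _ = β * (1 - c i) := by rw [hb1, mul_one]
    rw [← h2, h1]
  -- β = 0
  have hβ0 : β = 0 := by
    by_contra hβne
    have hc1 : ∀ i, c i = 1 := by
      intro i
      have := hrowN i
      rcases mul_eq_zero.mp this with h | h
      · exact absurd h hβne
      · linarith
    have i0 : Fin s := ⟨0, by omega⟩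
    have i1 : Fin s := ⟨1, by omega⟩
    have : (⟨0, by omega⟩ : Fin s) = ⟨1, by omega⟩ := by
      apply hdist; rw [hc1, hc1]
    simp at this
  intro i j
  have := hβ i j
  rw [hβ0, zero_mul] at this
  simp only [hN] at this
  linarith
end

section
/- Let b, c ∈ ℝˢ satisfy the quadrature conditions ∑ᵢ bᵢcᵢ^{k−1} = 1/k for 1 ≤ k ≤ m. Then the Runge–Kutta matrix A = cbᵀ satisfies the triple bush condition: for all polynomials P, Q, R with P(0) = Q(0) = 0, deg P ≤ m−1, deg Q ≤ m−1, deg R ≤ m−2, one has bᵀP'(C)AR(C)AQ(c) + bᵀQ'(C)AR(C)AP(c) − P(1)bᵀR(C)AQ(c) − Q(1)bᵀR(C)AP(c) − bᵀR'(C)(AQ(c) ⊙ AP(c)) + R(1)∫₀¹P dt ∫₀¹Q dt = 0. -/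
open Polynomial

lemma int_deriv_tb (S : Polynomial ℝ) :
    ∫ t in (0:ℝ)..1, (Polynomial.derivative S).eval t = S.eval 1 - S.eval 0 := by
  refine intervalIntegral.integral_eq_sub_of_hasDerivAt (fun x _ => S.hasDerivAt x) ?_
  exact (S.derivative.continuous_aeval).intervalIntegrable 0 1

lemma quad_eval_tb {s m : ℕ} (b c : Fin s → ℝ)
    (hquad : ∀ k : ℕ, 1 ≤ k → k ≤ m → ∑ i, b i * c i ^ (k - 1) = 1 / (k : ℝ))
    (hm : 1 ≤ m) (S : Polynomial ℝ) (hS : S.natDegree ≤ m - 1) :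
    ∑ i, b i * S.eval (c i) = ∫ t in (0:ℝ)..1, S.eval t := by
  have hmono : ∀ k : ℕ, k ≤ m - 1 → ∑ i, b i * c i ^ k = 1 / ((k : ℝ) + 1) := by
    intro k hk
    have h := hquad (k + 1) (by omega) (by omega)
    simpa using h
  have hev : ∀ x : ℝ, S.eval x = ∑ k ∈ Finset.range (S.natDegree + 1), S.coeff k * x ^ k := by
    intro x; exact S.eval_eq_sum_range x
  calc ∑ i, b i * S.eval (c i)
      = ∑ i, ∑ k ∈ Finset.range (S.natDegree + 1), S.coeff k * (b i * c i ^ k) := by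
        refine Finset.sum_congr rfl fun i _ => ?_
        rw [hev, Finset.mul_sum]
        exact Finset.sum_congr rfl fun k _ => by ring
    _ = ∑ k ∈ Finset.range (S.natDegree + 1), S.coeff k * ∑ i, b i * c i ^ k := by
        rw [Finset.sum_comm]
        exact Finset.sum_congr rfl fun k _ => (Finset.mul_sum _ _ _).symm
    _ = ∑ k ∈ Finset.range (S.natDegree + 1), S.coeff k * (1 / ((k : ℝ) + 1)) := by
        refine Finset.sum_congr rfl fun k hk => ?_
        rw [hmono k (le_trans (Nat.lt_succ_iff.mp (Finset.mem_range.mp hk)) hS)]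
    _ = ∫ t in (0:ℝ)..1, S.eval t := by
        rw [intervalIntegral.integral_congr (g := fun t => ∑ k ∈ Finset.range (S.natDegree + 1), S.coeff k * t ^ k) (fun t _ => hev t)]
        rw [intervalIntegral.integral_finset_sum]
        · refine Finset.sum_congr rfl fun k _ => ?_
          rw [intervalIntegral.integral_const_mul, integral_pow]
          simp
        · intro k _
          exact ((continuous_const.mul (continuous_pow k)).intervalIntegrable 0 1)

lemma dsum_tb {s : ℕ} (u v : Fin s → ℝ) (k : ℝ) :
    ∑ i, ∑ j, u i * v j * k = (∑ i, u i) * (∑ j, v j) * k := by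
  rw [Finset.sum_mul_sum, Finset.sum_mul]
  exact Finset.sum_congr rfl fun i _ => by rw [Finset.sum_mul]

set_option maxHeartbeats 1000000 in
/-- The AVF matrix `A = cbᵀ` satisfies the triple bush conditions in polynomial form. -/
theorem avf_satisfies_triple_bush (s m : ℕ) (b c : Fin s → ℝ)
    (hquad : ∀ k : ℕ, 1 ≤ k → k ≤ m → ∑ i, b i * c i ^ (k - 1) = 1 / (k : ℝ))
    (P Q R : Polynomial ℝ)
    (hP0 : P.eval 0 = 0) (hQ0 : Q.eval 0 = 0)
    (hPd : P.natDegree ≤ m - 1) (hQd : Q.natDegree ≤ m - 1) (hRd : R.natDegree ≤ m - 2) :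
    (let A : Matrix (Fin s) (Fin s) ℝ := fun i j => c i * b j
     let AQ : Fin s → ℝ := fun i => ∑ j, A i j * Q.eval (c j)
     let AP : Fin s → ℝ := fun i => ∑ j, A i j * P.eval (c j)
     (∑ i, ∑ j, b i * (Polynomial.derivative P).eval (c i) * A i j * R.eval (c j) * AQ j) +
     (∑ i, ∑ j, b i * (Polynomial.derivative Q).eval (c i) * A i j * R.eval (c j) * AP j) -
     P.eval 1 * (∑ i, b i * R.eval (c i) * AQ i) -
     Q.eval 1 * (∑ i, b i * R.eval (c i) * AP i) -
     (∑ i, b i * (Polynomial.derivative R).eval (c i) * (AQ i * AP i)) +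
     R.eval 1 * (∫ t in (0:ℝ)..1, P.eval t) * (∫ t in (0:ℝ)..1, Q.eval t) = 0) := by
  intro A AQ AP
  simp only [A, AQ, AP]
  by_cases hm : 2 ≤ m
  · -- main case
    set SQ := ∑ k, b k * Q.eval (c k) with hSQdef
    set SP := ∑ k, b k * P.eval (c k) with hSPdef
    have hQc : ∀ j, (∑ k, c j * b k * Q.eval (c k)) = c j * SQ := fun j => by
      rw [hSQdef, Finset.mul_sum]; exact Finset.sum_congr rfl fun k _ => by ring
    have hPc : ∀ j, (∑ k, c j * b k * P.eval (c k)) = c j * SP := fun j => by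
      rw [hSPdef, Finset.mul_sum]; exact Finset.sum_congr rfl fun k _ => by ring
    simp only [hQc, hPc]
    have hm1 : 1 ≤ m := by omega
    have hdeg0 : ∀ S : Polynomial ℝ, S.natDegree = 0 → Polynomial.derivative S = 0 := by
      intro S h
      rw [eq_C_of_natDegree_le_zero h.le]; simp
    have hdXP : ((X : ℝ[X]) * Polynomial.derivative P).natDegree ≤ m - 1 := by
      rcases eq_or_ne (Polynomial.derivative P) 0 with h | h
      · simp [h]
      · have h1 : P.natDegree ≠ 0 := fun h0 => h (hdeg0 P h0)
        calc ((X : ℝ[X]) * Polynomial.derivative P).natDegree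
            ≤ (X : ℝ[X]).natDegree + (Polynomial.derivative P).natDegree := natDegree_mul_le
          _ ≤ m - 1 := by
              have := natDegree_derivative_le P
              rw [natDegree_X]; omega
    have hdXQ : ((X : ℝ[X]) * Polynomial.derivative Q).natDegree ≤ m - 1 := by
      rcases eq_or_ne (Polynomial.derivative Q) 0 with h | h
      · simp [h]
      · have h1 : Q.natDegree ≠ 0 := fun h0 => h (hdeg0 Q h0)
        calc ((X : ℝ[X]) * Polynomial.derivative Q).natDegree
            ≤ (X : ℝ[X]).natDegree + (Polynomial.derivative Q).natDegree := natDegree_mul_le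
          _ ≤ m - 1 := by
              have := natDegree_derivative_le Q
              rw [natDegree_X]; omega
    have hdXR : ((X : ℝ[X]) * R).natDegree ≤ m - 1 := by
      calc ((X : ℝ[X]) * R).natDegree ≤ (X : ℝ[X]).natDegree + R.natDegree := natDegree_mul_le
        _ ≤ m - 1 := by rw [natDegree_X]; omega
    have hdX2R : ((X : ℝ[X]) ^ 2 * Polynomial.derivative R).natDegree ≤ m - 1 := by
      rcases eq_or_ne (Polynomial.derivative R) 0 with h | h
      · simp [h]
      · have h1 : R.natDegree ≠ 0 := fun h0 => h (hdeg0 R h0)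
        calc ((X : ℝ[X]) ^ 2 * Polynomial.derivative R).natDegree
            ≤ ((X : ℝ[X]) ^ 2).natDegree + (Polynomial.derivative R).natDegree := natDegree_mul_le
          _ ≤ m - 1 := by
              have := natDegree_derivative_le R
              rw [natDegree_X_pow]; omega
    -- sum rewrites
    have t1 : ∑ x : Fin s, ∑ y : Fin s,
        b x * Polynomial.eval (c x) (Polynomial.derivative P) * (c x * b y) * Polynomial.eval (c y) R * (c y * SQ)
        = (∑ x, b x * Polynomial.eval (c x) ((X : ℝ[X]) * Polynomial.derivative P)) *
          (∑ y, b y * Polynomial.eval (c y) ((X : ℝ[X]) * R)) * SQ := by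
      rw [← dsum_tb]
      refine Finset.sum_congr rfl fun x _ => Finset.sum_congr rfl fun y _ => ?_
      simp only [eval_mul, eval_X]; ring
    have t2 : ∑ x : Fin s, ∑ y : Fin s,
        b x * Polynomial.eval (c x) (Polynomial.derivative Q) * (c x * b y) * Polynomial.eval (c y) R * (c y * SP)
        = (∑ x, b x * Polynomial.eval (c x) ((X : ℝ[X]) * Polynomial.derivative Q)) *
          (∑ y, b y * Polynomial.eval (c y) ((X : ℝ[X]) * R)) * SP := by
      rw [← dsum_tb]
      refine Finset.sum_congr rfl fun x _ => Finset.sum_congr rfl fun y _ => ?_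
      simp only [eval_mul, eval_X]; ring
    have t3 : ∑ x : Fin s, b x * Polynomial.eval (c x) R * (c x * SQ)
        = (∑ x, b x * Polynomial.eval (c x) ((X : ℝ[X]) * R)) * SQ := by
      rw [Finset.sum_mul]
      refine Finset.sum_congr rfl fun x _ => ?_
      simp only [eval_mul, eval_X]; ring
    have t4 : ∑ x : Fin s, b x * Polynomial.eval (c x) R * (c x * SP)
        = (∑ x, b x * Polynomial.eval (c x) ((X : ℝ[X]) * R)) * SP := by
      rw [Finset.sum_mul]
      refine Finset.sum_congr rfl fun x _ => ?_
      simp only [eval_mul, eval_X]; ring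
    have t5 : ∑ x : Fin s, b x * Polynomial.eval (c x) (Polynomial.derivative R) * (c x * SQ * (c x * SP))
        = (∑ x, b x * Polynomial.eval (c x) ((X : ℝ[X]) ^ 2 * Polynomial.derivative R)) * (SQ * SP) := by
      rw [Finset.sum_mul]
      refine Finset.sum_congr rfl fun x _ => ?_
      simp only [eval_mul, eval_X, eval_pow]; ring
    rw [t1, t2, t3, t4, t5]
    -- quadrature evaluations
    have hint : ∀ T : Polynomial ℝ, IntervalIntegrable (fun t => Polynomial.eval t T) MeasureTheory.volume 0 1 :=
      fun T => T.continuous_aeval.intervalIntegrable 0 1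
    have hSQI : SQ = ∫ t in (0:ℝ)..1, Q.eval t := quad_eval_tb b c hquad hm1 Q hQd
    have hSPI : SP = ∫ t in (0:ℝ)..1, P.eval t := quad_eval_tb b c hquad hm1 P hPd
    have hXR : (∑ x, b x * Polynomial.eval (c x) ((X : ℝ[X]) * R))
        = ∫ t in (0:ℝ)..1, Polynomial.eval t ((X : ℝ[X]) * R) := quad_eval_tb b c hquad hm1 _ hdXR
    have hXP : (∑ x, b x * Polynomial.eval (c x) ((X : ℝ[X]) * Polynomial.derivative P))
        = P.eval 1 - ∫ t in (0:ℝ)..1, P.eval t := by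
      rw [quad_eval_tb b c hquad hm1 _ hdXP]
      have hid : (X : ℝ[X]) * Polynomial.derivative P = Polynomial.derivative ((X : ℝ[X]) * P) - P := by
        rw [derivative_mul, derivative_X]; ring
      rw [hid]
      have hsub : ∫ t in (0:ℝ)..1, Polynomial.eval t (Polynomial.derivative ((X : ℝ[X]) * P) - P)
          = (∫ t in (0:ℝ)..1, Polynomial.eval t (Polynomial.derivative ((X : ℝ[X]) * P)))
            - ∫ t in (0:ℝ)..1, Polynomial.eval t P := by
        simp only [eval_sub]
        exact intervalIntegral.integral_sub (hint _) (hint _)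
      rw [hsub, int_deriv_tb]
      simp
    have hXQ : (∑ x, b x * Polynomial.eval (c x) ((X : ℝ[X]) * Polynomial.derivative Q))
        = Q.eval 1 - ∫ t in (0:ℝ)..1, Q.eval t := by
      rw [quad_eval_tb b c hquad hm1 _ hdXQ]
      have hid : (X : ℝ[X]) * Polynomial.derivative Q = Polynomial.derivative ((X : ℝ[X]) * Q) - Q := by
        rw [derivative_mul, derivative_X]; ring
      rw [hid]
      have hsub : ∫ t in (0:ℝ)..1, Polynomial.eval t (Polynomial.derivative ((X : ℝ[X]) * Q) - Q)
          = (∫ t in (0:ℝ)..1, Polynomial.eval t (Polynomial.derivative ((X : ℝ[X]) * Q)))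
            - ∫ t in (0:ℝ)..1, Polynomial.eval t Q := by
        simp only [eval_sub]
        exact intervalIntegral.integral_sub (hint _) (hint _)
      rw [hsub, int_deriv_tb]
      simp
    have hX2R : (∑ x, b x * Polynomial.eval (c x) ((X : ℝ[X]) ^ 2 * Polynomial.derivative R))
        = R.eval 1 - 2 * ∫ t in (0:ℝ)..1, Polynomial.eval t ((X : ℝ[X]) * R) := by
      rw [quad_eval_tb b c hquad hm1 _ hdX2R]
      have hid : (X : ℝ[X]) ^ 2 * Polynomial.derivative R
          = Polynomial.derivative ((X : ℝ[X]) ^ 2 * R) - Polynomial.C 2 * ((X : ℝ[X]) * R) := by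
        rw [derivative_mul, derivative_pow, derivative_X]
        push_cast
        ring
      rw [hid]
      have hsub : ∫ t in (0:ℝ)..1, Polynomial.eval t (Polynomial.derivative ((X : ℝ[X]) ^ 2 * R) - Polynomial.C 2 * ((X : ℝ[X]) * R))
          = (∫ t in (0:ℝ)..1, Polynomial.eval t (Polynomial.derivative ((X : ℝ[X]) ^ 2 * R)))
            - 2 * ∫ t in (0:ℝ)..1, Polynomial.eval t ((X : ℝ[X]) * R) := by
        simp only [eval_sub]
        have hC2 : ∀ t : ℝ, Polynomial.eval t (Polynomial.C 2 * ((X : ℝ[X]) * R)) = 2 * Polynomial.eval t ((X : ℝ[X]) * R) := fun t => by simp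
        simp only [hC2]
        have hii : IntervalIntegrable (fun t => 2 * Polynomial.eval t ((X : ℝ[X]) * R)) MeasureTheory.volume 0 1 :=
          (continuous_const.mul ((X : ℝ[X]) * R).continuous).intervalIntegrable 0 1
        rw [intervalIntegral.integral_sub (hint _) hii, intervalIntegral.integral_const_mul]
      rw [hsub, int_deriv_tb]
      simp
    rw [hXR, hXP, hXQ, hX2R, hSQI, hSPI]
    ring
  · -- degenerate case : P = Q = 0
    have hP : P = 0 := by
      have := eq_C_of_natDegree_le_zero (le_trans hPd (by omega))
      rw [this] at hP0 ⊢
      simp at hP0; simp [hP0]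
    have hQ : Q = 0 := by
      have := eq_C_of_natDegree_le_zero (le_trans hQd (by omega))
      rw [this] at hQ0 ⊢
      simp at hQ0; simp [hQ0]
    simp [hP, hQ]
end

section
/- Let s = 2 and let c₁,c₂ be the zeros of P₂ − ζP₁ for some ζ ∈ ℝ with c₁ ≠ c₂, and b the weights satisfying ∑ᵢbᵢcᵢ^{k−1} = 1/k for k = 1,2,3. Set N = ((ζ−1)𝟏 − 2ζc)bᵀ(I − 2C) and A = cbᵀ + βN. If A satisfies the condition bᵀ(Ac)² − bᵀACAc + bᵀC Ac − 1/4 = 0 (the q = 2 case of the condition from the asymmetric bush tree), then β²(1+ζ)² = 0; in particular β = 0 when ζ ≠ −1. -/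
open Polynomial Finset

theorem eval_legP_one (x : ℝ) : (legP 1).eval x = 2 * x - 1 := by
  simp [legP, derivative_mul]
  ring

theorem eval_legP_two (x : ℝ) : (legP 2).eval x = 6 * x ^ 2 - 6 * x + 1 := by
  have h : (X ^ 2 * (X - 1) ^ 2 : ℝ[X]) = X ^ 4 - 2 * X ^ 3 + X ^ 2 := by ring
  simp [legP, h]
  ring

section Bush

variable {ι : Type*} [Fintype ι] (b c : ι → ℝ)

noncomputable def bushDefect (A : Matrix ι ι ℝ) : ℝ :=
  let Ac : ι → ℝ := fun i => ∑ j, A i j * c j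
  (∑ i, b i * (Ac i) ^ 2) - 2 * (∑ i, ∑ j, b i * A i j * c j * Ac j) +
    2 * (∑ i, b i * c i * Ac i) - (1 / 2 : ℝ) ^ 2

theorem bushDefect_eq_sum (A : Matrix ι ι ℝ) (w r : ι → ℝ)
    (hw : ∀ i, ∑ j, A i j * c j = w i) (hr : ∀ j, ∑ i, b i * A i j = r j) :
    bushDefect b c A =
      ∑ j, (b j * w j ^ 2 - 2 * r j * c j * w j + 2 * b j * c j * w j) - 1 / 4 := by
  have hswap : ∑ i, ∑ j, b i * A i j * c j * w j = ∑ j, r j * c j * w j := by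
    rw [sum_comm]
    exact sum_congr rfl fun j _ => by simp only [← hr j, sum_mul]
  simp only [bushDefect, hw, hswap, mul_sum, ← sum_sub_distrib, ← sum_add_distrib]
  norm_num
  exact sum_congr rfl fun j _ => by ring

def coeffMatrix (ζ β : ℝ) : Matrix ι ι ℝ :=
  fun i j => c i * b j + β * (((ζ - 1) - 2 * ζ * c i) * (b j * (1 - 2 * c j)))

variable {b c}

theorem sum_weights_mul_quadratic (h0 : ∑ i, b i = 1) (h1 : ∑ i, b i * c i = 1 / 2)
    (h2 : ∑ i, b i * c i ^ 2 = 1 / 3) (x y z : ℝ) :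
    ∑ i, b i * (x * c i ^ 2 + y * c i + z) = x / 3 + y / 2 + z := by
  have : ∑ i, b i * (x * c i ^ 2 + y * c i + z)
      = x * ∑ i, b i * c i ^ 2 + y * ∑ i, b i * c i + z * ∑ i, b i := by
    simp only [mul_sum, ← sum_add_distrib]
    exact sum_congr rfl fun i _ => by ring
  rw [this, h0, h1, h2]
  ring

theorem coeffMatrix_mulVec_nodes (ζ β : ℝ) (h1 : ∑ i, b i * c i = 1 / 2)
    (h2 : ∑ i, b i * c i ^ 2 = 1 / 3) (i : ι) :
    ∑ j, coeffMatrix b c ζ β i j * c j = (1 / 2 + β * ζ / 3) * c i + β * (1 - ζ) / 6 := by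
  have : ∑ j, coeffMatrix b c ζ β i j * c j = c i * ∑ j, b j * c j +
      β * ((ζ - 1) - 2 * ζ * c i) * (∑ j, b j * c j - 2 * ∑ j, b j * c j ^ 2) := by
    simp only [coeffMatrix, mul_sum, ← sum_sub_distrib, ← sum_add_distrib]
    exact sum_congr rfl fun j _ => by ring
  rw [this, h1, h2]
  ring

theorem weights_vecMul_coeffMatrix (ζ β : ℝ) (h0 : ∑ i, b i = 1)
    (h1 : ∑ i, b i * c i = 1 / 2) (j : ι) :
    ∑ i, b i * coeffMatrix b c ζ β i j = b j * (1 / 2 - β + 2 * β * c j) := by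
  have : ∑ i, b i * coeffMatrix b c ζ β i j = b j * ∑ i, b i * c i +
      β * b j * (1 - 2 * c j) * ((ζ - 1) * ∑ i, b i - 2 * ζ * ∑ i, b i * c i) := by
    simp only [coeffMatrix, mul_sum, ← sum_sub_distrib, ← sum_add_distrib]
    exact sum_congr rfl fun i _ => by ring
  rw [this, h0, h1]
  ring

theorem bushDefect_coeffMatrix (ζ β : ℝ) (h0 : ∑ i, b i = 1) (h1 : ∑ i, b i * c i = 1 / 2)
    (h2 : ∑ i, b i * c i ^ 2 = 1 / 3)
    (hroot : ∀ i, 6 * c i ^ 2 - 6 * c i + 1 - ζ * (2 * c i - 1) = 0) :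
    bushDefect b c (coeffMatrix b c ζ β) = -(β * (1 + ζ)) ^ 2 / 36 := by
  rw [bushDefect_eq_sum b c _ _ _ (coeffMatrix_mulVec_nodes ζ β h1 h2)
    (weights_vecMul_coeffMatrix ζ β h0 h1)]
  -- with `Ac = αc + γ`, the summand is `b (αc + γ)(αc + γ + (1 + 2β)c - 4βc²)`, and the root
  -- equation turns the second factor into `δc + ε`
  have hsummand : ∀ j, b j * ((1 / 2 + β * ζ / 3) * c j + β * (1 - ζ) / 6) ^ 2
      - 2 * (b j * (1 / 2 - β + 2 * β * c j)) * c j * ((1 / 2 + β * ζ / 3) * c j + β * (1 - ζ) / 6)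
      + 2 * b j * c j * ((1 / 2 + β * ζ / 3) * c j + β * (1 - ζ) / 6)
      = b j * (((1 / 2 + β * ζ / 3) * (3 / 2 - β * (2 + ζ))) * c j ^ 2
        + ((1 / 2 + β * ζ / 3) * (β * (5 + 3 * ζ) / 6)
          + β * (1 - ζ) / 6 * (3 / 2 - β * (2 + ζ))) * c j
        + β * (1 - ζ) / 6 * (β * (5 + 3 * ζ) / 6)) := fun j => by
    linear_combination (-2 * β / 3) * b j * ((1 / 2 + β * ζ / 3) * c j + β * (1 - ζ) / 6) * hroot j
  rw [sum_congr rfl fun j _ => hsummand j, sum_weights_mul_quadratic h0 h1 h2]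
  ring

end Bush

theorem two_stage_asymmetric_bush_general (b c : Fin 2 → ℝ) (ζ β : ℝ)
    (hzero : ∀ i, (legP 2 - Polynomial.C ζ * legP 1).eval (c i) = 0)
    (hquad : ∀ k : ℕ, 1 ≤ k → k ≤ 3 → ∑ i, b i * c i ^ (k - 1) = 1 / (k : ℝ)) :
    (let N : Matrix (Fin 2) (Fin 2) ℝ :=
      fun i j => ((ζ - 1) - 2 * ζ * c i) * (b j * (1 - 2 * c j))
     let A : Matrix (Fin 2) (Fin 2) ℝ := fun i j => c i * b j + β * N i j
     let Ac : Fin 2 → ℝ := fun i => ∑ j, A i j * c j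
     (∑ i, b i * (Ac i) ^ 2) - 2 * (∑ i, ∑ j, b i * A i j * c j * Ac j) +
       2 * (∑ i, b i * c i * Ac i) - (1 / 2 : ℝ) ^ 2 = 0) →
    β ^ 2 * (1 + ζ) ^ 2 = 0 ∧ (ζ ≠ -1 → β = 0) := by
  intro hbush
  have h0 : ∑ i, b i = 1 := by simpa using hquad 1 le_rfl (by norm_num)
  have h1 : ∑ i, b i * c i = 1 / 2 := by simpa using hquad 2 (by norm_num) (by norm_num)
  have h2 : ∑ i, b i * c i ^ 2 = 1 / 3 := by simpa using hquad 3 (by norm_num) le_rfl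
  have hroot (i : Fin 2) : 6 * c i ^ 2 - 6 * c i + 1 - ζ * (2 * c i - 1) = 0 := by
    simpa [eval_legP_one, eval_legP_two] using hzero i
  have hdefect : -(β * (1 + ζ)) ^ 2 / 36 = 0 :=
    (bushDefect_coeffMatrix ζ β h0 h1 h2 hroot).symm.trans hbush
  have hsq : β ^ 2 * (1 + ζ) ^ 2 = 0 := by linear_combination -36 * hdefect
  refine ⟨hsq, fun hζ => ?_⟩
  have hζ' : 1 + ζ ≠ 0 := fun h => hζ (by linarith)
  simpa [hζ'] using hsq

/-- The two-stage case: the asymmetric bush condition (case `q = 2`) applied to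
`A = cbᵀ + βN` forces `β²(1+ζ)² = 0`, hence `β = 0` when `ζ ≠ -1`. -/
theorem two_stage_asymmetric_bush (b c : Fin 2 → ℝ) (ζ β : ℝ)
    (hne : c 0 ≠ c 1)
    (hzero : ∀ i, (legP 2 - Polynomial.C ζ * legP 1).eval (c i) = 0)
    (hquad : ∀ k : ℕ, 1 ≤ k → k ≤ 3 → ∑ i, b i * c i ^ (k - 1) = 1 / (k : ℝ)) :
    (let N : Matrix (Fin 2) (Fin 2) ℝ :=
      fun i j => ((ζ - 1) - 2 * ζ * c i) * (b j * (1 - 2 * c j))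
     let A : Matrix (Fin 2) (Fin 2) ℝ := fun i j => c i * b j + β * N i j
     let Ac : Fin 2 → ℝ := fun i => ∑ j, A i j * c j
     (∑ i, b i * (Ac i) ^ 2) - 2 * (∑ i, ∑ j, b i * A i j * c j * Ac j) +
       2 * (∑ i, b i * c i * Ac i) - (1 / 2 : ℝ) ^ 2 = 0) →
    β ^ 2 * (1 + ζ) ^ 2 = 0 ∧ (ζ ≠ -1 → β = 0) :=
  two_stage_asymmetric_bush_general b c ζ β hzero hquad
end
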